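/- arXiv:1607.05166 — 3 statements merged into one kernel-verified Lean document; each statement's English description precedes it below -/
import Mathlib

section
/- Any nonzero solution f: S → ℂ of the Kannappan equation f(xyz₀) + f(xσ(y)z₀) = 2f(x)f(y) has the form f = g(z₀)·g, where g satisfies d'Alembert's equation g(xy) + g(xσ(y)) = 2g(x)g(y), g(z₀) ≠ 0, and g(xz₀) = g(z₀)g(x) for all x; explicitly g(x) = f(xz₀)/f(z₀). -/
/-!
Since `f ≠ 0`, swapping `y` and `σ y` in the equation shows `f ∘ σ = f`. The element
`c = z₀ σ(z₀)` is central and fixed by `σ`, and feeding `(σ z₀, σ y)` and `(u, z₀)` into the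
equation gives `f (y c) = f (u z₀ z₀) = f z₀ f u`. Consequently both `2 f(x z₀) f(y)` and
`2 f(x) f(y z₀)` equal `f z₀ (f(xy) + f(xσy))`, so `x ↦ f (x z₀)` is a multiple `k f` of `f`,
with `k ≠ 0` and `f z₀ = k²`; then `g = f / k` is the required solution of d'Alembert's equation.
-/

open Function

section Involution

variable {S : Type*} [Semigroup S] {σ : S → S}

theorem map_mul_of_commute_map
    (hσ : (∀ x y, σ (x * y) = σ x * σ y) ∨ (∀ x y, σ (x * y) = σ y * σ x))
    {a b : S} (h : Commute (σ a) (σ b)) : σ (a * b) = σ a * σ b := by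
  rcases hσ with hmul | hanti
  · exact hmul a b
  · rw [hanti, h.eq]

theorem commute_map_of_forall_commute
    (hσ : (∀ x y, σ (x * y) = σ x * σ y) ∨ (∀ x y, σ (x * y) = σ y * σ x))
    (hσσ : Involutive σ) {z : S} (hz : ∀ x, Commute z x) (x : S) : Commute (σ z) x := by
  have h := congrArg σ (hz (σ x)).eq
  rcases hσ with hmul | hanti
  · rwa [hmul, hmul, hσσ] at h
  · rw [hanti, hanti, hσσ] at h
    exact h.symm

theorem map_mul_map_self
    (hσ : (∀ x y, σ (x * y) = σ x * σ y) ∨ (∀ x y, σ (x * y) = σ y * σ x))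
    (hσσ : Involutive σ) {z : S} (hz : ∀ x, Commute z x) : σ (z * σ z) = z * σ z := by
  rw [map_mul_of_commute_map hσ (by rw [hσσ]; exact commute_map_of_forall_commute hσ hσσ hz z),
    hσσ, (hz (σ z)).eq]

end Involution

def KannappanEq {S : Type*} [Mul S] (σ : S → S) (z₀ : S) (f : S → ℂ) : Prop :=
  ∀ x y, f (x * y * z₀) + f (x * σ y * z₀) = 2 * f x * f y

namespace KannappanEq

theorem apply_map {S : Type*} [Mul S] {σ : S → S} {z₀ : S} {f : S → ℂ}
    (hf : KannappanEq σ z₀ f) (hσσ : Involutive σ) (hf0 : f ≠ 0) (y : S) : f (σ y) = f y := by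
  obtain ⟨x₀, hx₀⟩ := Function.ne_iff.mp hf0
  have h := hf x₀ (σ y)
  rw [hσσ, add_comm, hf x₀ y] at h
  exact (mul_left_cancel₀ (mul_ne_zero two_ne_zero hx₀) h).symm

variable {S : Type*} [Semigroup S] {σ : S → S} {z₀ : S} {f : S → ℂ}

theorem apply_mul_mul_map (hf : KannappanEq σ z₀ f)
    (hσ : (∀ x y, σ (x * y) = σ x * σ y) ∨ (∀ x y, σ (x * y) = σ y * σ x))
    (hσσ : Involutive σ) (hz : ∀ x, Commute z₀ x) (hf0 : f ≠ 0) (y : S) :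
    f (y * (z₀ * σ z₀)) = f z₀ * f y := by
  have hw := commute_map_of_forall_commute hσ hσσ hz
  have hc : ∀ a, σ z₀ * a * z₀ = a * (z₀ * σ z₀) := fun a => by
    rw [(hw a).eq, mul_assoc, (hz _).eq]
  have hflip : f (σ y * (z₀ * σ z₀)) = f (y * (z₀ * σ z₀)) := by
    have hfix := map_mul_map_self hσ hσσ hz
    rw [← hf.apply_map hσσ hf0, map_mul_of_commute_map hσ, hσσ, hfix]
    rw [hσσ, hfix]
    exact (hz y).symm.mul_right (hw y).symm
  have h := hf (σ z₀) (σ y)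
  rw [hσσ, hf.apply_map hσσ hf0, hf.apply_map hσσ hf0, hc, hc, hflip] at h
  linear_combination h / 2

theorem apply_mul_mul_self (hf : KannappanEq σ z₀ f)
    (hσ : (∀ x y, σ (x * y) = σ x * σ y) ∨ (∀ x y, σ (x * y) = σ y * σ x))
    (hσσ : Involutive σ) (hz : ∀ x, Commute z₀ x) (hf0 : f ≠ 0) (u : S) :
    f (u * z₀ * z₀) = f z₀ * f u := by
  have h := hf u z₀
  rw [mul_assoc u (σ z₀), ← (hz (σ z₀)).eq, hf.apply_mul_mul_map hσ hσσ hz hf0] at h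
  linear_combination h


theorem apply_mul_mul_eq_mul_apply_mul (hf : KannappanEq σ z₀ f)
    (hσ : (∀ x y, σ (x * y) = σ x * σ y) ∨ (∀ x y, σ (x * y) = σ y * σ x))
    (hσσ : Involutive σ) (hz : ∀ x, Commute z₀ x) (hf0 : f ≠ 0) (x y : S) :
    f (x * z₀) * f y = f x * f (y * z₀) := by
  have hshift : ∀ a, x * z₀ * a * z₀ = x * a * z₀ * z₀ := fun a => by
    rw [mul_assoc x, (hz a).eq, ← mul_assoc]
  have hleft : 2 * f (x * z₀) * f y = f z₀ * (f (x * y) + f (x * σ y)) := by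
    rw [← hf, hshift, hshift, hf.apply_mul_mul_self hσ hσσ hz hf0,
      hf.apply_mul_mul_self hσ hσσ hz hf0, mul_add]
  have hright : 2 * f x * f (y * z₀) = f z₀ * (f (x * y) + f (x * σ y)) := by
    have hw := commute_map_of_forall_commute hσ hσσ hz
    rw [← hf, map_mul_of_commute_map hσ (hw (σ y)).symm, ← mul_assoc, ← mul_assoc,
      mul_assoc _ (σ z₀), ← (hz (σ z₀)).eq, hf.apply_mul_mul_self hσ hσσ hz hf0,
      hf.apply_mul_mul_map hσ hσσ hz hf0, mul_add]
  linear_combination (hleft - hright) / 2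

theorem exists_apply_mul_eq_mul (hf : KannappanEq σ z₀ f)
    (hσ : (∀ x y, σ (x * y) = σ x * σ y) ∨ (∀ x y, σ (x * y) = σ y * σ x))
    (hσσ : Involutive σ) (hz : ∀ x, Commute z₀ x) (hf0 : f ≠ 0) :
    ∃ k : ℂ, k ≠ 0 ∧ f z₀ = k ^ 2 ∧ ∀ x, f (x * z₀) = k * f x := by
  obtain ⟨x₀, hx₀⟩ := Function.ne_iff.mp hf0
  obtain ⟨k, hk⟩ : ∃ k : ℂ, ∀ x, f (x * z₀) = k * f x := ⟨f (x₀ * z₀) / f x₀, fun x => by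
    rw [div_mul_eq_mul_div, eq_div_iff hx₀, hf.apply_mul_mul_eq_mul_apply_mul hσ hσσ hz hf0]
    ring⟩
  refine ⟨k, fun hk0 => ?_, ?_, hk⟩
  · have h := hf x₀ x₀
    rw [hk (x₀ * x₀), hk (x₀ * σ x₀), hk0] at h
    exact hx₀ (pow_eq_zero_iff two_ne_zero |>.mp (by linear_combination -h / 2))
  · have h := hf.apply_mul_mul_self hσ hσσ hz hf0 x₀
    rw [hk, hk] at h
    exact mul_right_cancel₀ hx₀ (by linear_combination -h)

end KannappanEq

theorem stmt6 {S : Type*} [Semigroup S] (σ : S → S) (hσ : (∀ x y, σ (x * y) = σ x * σ y) ∨ (∀ x y, σ (x * y) = σ y * σ x))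
    (hσσ : ∀ x, σ (σ x) = x)
    (z₀ : S) (hz : ∀ x, z₀ * x = x * z₀) (f : S → ℂ) (hf0 : f ≠ 0) (hf : ∀ x y, f (x * y * z₀) + f (x * σ y * z₀) = 2 * f x * f y) :
    ∃ g : S → ℂ, (∀ x y, g (x * y) + g (x * σ y) = 2 * g x * g y) ∧
      g z₀ ≠ 0 ∧ (∀ x, g (x * z₀) = g z₀ * g x) ∧
      (∀ x, f x = g z₀ * g x) ∧ (∀ x, g x = f (x * z₀) / f z₀) := by
  obtain ⟨k, hk0, hfz, hk⟩ := KannappanEq.exists_apply_mul_eq_mul hf hσ hσσ hz hf0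
  refine ⟨fun x => f x / k, fun x y => ?_, ?_, fun x => ?_, fun x => ?_, fun x => ?_⟩
  · have h := hf x y
    rw [hk, hk] at h
    field_simp
    linear_combination h
  · simpa [hfz, pow_two] using hk0
  · simp only [hk, hfz]
    field_simp
  · simp only [hfz]
    field_simp
  · simp only [hk, hfz]
    field_simp
end

section
/- If f: S → ℂ is a nonzero solution of f(xσ(y)z₀) − f(xyz₀) = 2f(x)f(y), then f(σ(x)z₀) = f(xz₀) for all x ∈ S. -/
/-!
Write `F x = f (x * z₀)` and `g x = F (σ x) - F x`. Comparing the equation at `(x₀, y)` and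
`(x₀, σ y)` gives `f ∘ σ = -f`, and combining further instances gives
`F x * g y = -2 f y (f x f z₀ + F (x z₀))`. Since `F ≠ 0`, this forces `g = c f` for a constant `c`,
and then `F (x z₀)` is an explicit combination of `F x` and `f x`. Evaluating `F (σ (x z₀))` in two
ways gives `c (2 F + c f) = 0`. If `c ≠ 0`, then `F` is a multiple of `f`, and the equation at
`(x, x)` and at `(σ x, σ x)` gives `f x ^ 2 = -f x ^ 2`, because
`f (σ x * x) - f (σ x * σ x) = f (x * x) - f (x * σ x)` whether `σ` is a morphism or an
antimorphism. Hence `c = 0`, i.e. `g = 0`.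
-/

section

variable {S : Type*} [Semigroup S] {σ : S → S} {z₀ : S} {f : S → ℂ}

def IsVanVleckSolution (σ : S → S) (z₀ : S) (f : S → ℂ) : Prop :=
  ∀ x y, f (x * σ y * z₀) - f (x * y * z₀) = 2 * f x * f y

lemma map_mul_of_forall_mul_comm
    (hσ : (∀ x y, σ (x * y) = σ x * σ y) ∨ (∀ x y, σ (x * y) = σ y * σ x))
    {z : S} (hz : ∀ x, z * x = x * z) (a : S) :
    σ (a * z) = σ a * σ z := by
  rcases hσ with h | h
  · exact h a z
  · have hσz : σ z * σ a = σ a * σ z := by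
      rw [← h, ← hz, h, ← h, hz]
    rw [h, hσz]

lemma IsVanVleckSolution.apply_map (hσσ : ∀ x, σ (σ x) = x) (hf0 : f ≠ 0)
    (hf : IsVanVleckSolution σ z₀ f) (y : S) : f (σ y) = -f y := by
  obtain ⟨x₀, hx₀⟩ := Function.ne_iff.mp hf0
  have h := hf x₀ (σ y)
  rw [hσσ] at h
  have hsum : 2 * f x₀ * (f (σ y) + f y) = 0 := by linear_combination -hf x₀ y - h
  simp only [mul_eq_zero, two_ne_zero, false_or] at hsum
  rw [Pi.zero_apply] at hx₀
  linear_combination hsum.resolve_left hx₀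

lemma apply_map_mul_sub_apply_map_mul_map
    (hσ : (∀ x y, σ (x * y) = σ x * σ y) ∨ (∀ x y, σ (x * y) = σ y * σ x))
    (hσσ : ∀ x, σ (σ x) = x) (hodd : ∀ x, f (σ x) = -f x) (x : S) :
    f (σ x * x) - f (σ x * σ x) = f (x * x) - f (x * σ x) := by
  rcases hσ with h | h
  · rw [show σ x * x = σ (x * σ x) by rw [h, hσσ], ← h, hodd, hodd]
    ring
  · -- an antimorphism fixes every `y * σ y`, on which `f` therefore vanishes
    have hfix : ∀ y, f (y * σ y) = 0 := fun y => by
      have := hodd (y * σ y)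
      rw [h, hσσ] at this
      linear_combination this / 2
    have := hfix (σ x)
    rw [hσσ] at this
    rw [this, hfix x, ← h, hodd]
    ring

lemma eq_zero_of_forall_mul_sub_eq
    (hσ : (∀ x y, σ (x * y) = σ x * σ y) ∨ (∀ x y, σ (x * y) = σ y * σ x))
    (hσσ : ∀ x, σ (σ x) = x) (hodd : ∀ x, f (σ x) = -f x) {k : ℂ}
    (h : ∀ x, k * (f (x * σ x) - f (x * x)) = 2 * f x * f x) : f = 0 := by
  funext x
  have hσx := h (σ x)
  rw [hσσ, apply_map_mul_sub_apply_map_mul_map hσ hσσ hodd, hodd x] at hσx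
  have : f x * f x = 0 := by linear_combination -(h x + hσx) / 4
  exact mul_self_eq_zero.mp this

namespace IsVanVleckSolution

lemma apply_mul_map_mul_apply_center (hσz : ∀ a, σ (a * z₀) = σ a * σ z₀)
    (hz : ∀ x, z₀ * x = x * z₀) (hf : IsVanVleckSolution σ z₀ f) (x y : S) :
    f (x * σ y) * f z₀ = f x * f (y * z₀) - f (x * z₀) * f y := by
  have h1 := hf (x * z₀) y
  have h2 := hf x (y * z₀)
  have h3 := hf (x * σ y) z₀
  rw [hσz y] at h2
  simp only [mul_assoc, hz] at h1 h2 h3 ⊢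
  linear_combination (-h1 + h2 - h3) / 2

lemma apply_mul_center_mul_sub (hσσ : ∀ x, σ (σ x) = x) (hσz : ∀ a, σ (a * z₀) = σ a * σ z₀)
    (hz : ∀ x, z₀ * x = x * z₀) (hodd : ∀ x, f (σ x) = -f x) (hf : IsVanVleckSolution σ z₀ f)
    (x y : S) :
    f (x * z₀) * (f (σ y * z₀) - f (y * z₀)) = -2 * f y * (f x * f z₀ + f (x * z₀ * z₀)) := by
  have h1 := hf.apply_mul_map_mul_apply_center hσz hz (x * z₀) y
  have h2 := hf.apply_mul_map_mul_apply_center hσz hz (x * z₀) (σ y)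
  rw [hσσ, hodd] at h2
  have hcomm : ∀ u, x * z₀ * u = x * u * z₀ := by simp [mul_assoc, hz]
  rw [hcomm] at h1 h2
  linear_combination h1 - h2 - f z₀ * hf x y

lemma exists_apply_mul_center_ne_zero (hf0 : f ≠ 0) (hf : IsVanVleckSolution σ z₀ f) :
    ∃ x, f (x * z₀) ≠ 0 := by
  by_contra! h
  refine hf0 (funext fun x => ?_)
  have hx := hf x x
  rw [h, h] at hx
  exact mul_self_eq_zero.mp (by linear_combination -hx / 2)

lemma exists_sub_eq_mul (hσσ : ∀ x, σ (σ x) = x) (hσz : ∀ a, σ (a * z₀) = σ a * σ z₀)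
    (hz : ∀ x, z₀ * x = x * z₀) (hodd : ∀ x, f (σ x) = -f x) (hf0 : f ≠ 0)
    (hf : IsVanVleckSolution σ z₀ f) :
    ∃ c : ℂ, (∀ y, f (σ y * z₀) - f (y * z₀) = c * f y) ∧
      ∀ x, c * f (x * z₀) = -2 * (f x * f z₀ + f (x * z₀ * z₀)) := by
  have key := hf.apply_mul_center_mul_sub hσσ hσz hz hodd
  obtain ⟨x₁, hx₁⟩ := hf.exists_apply_mul_center_ne_zero hf0
  obtain ⟨y₀, hy₀⟩ := Function.ne_iff.mp hf0
  rw [Pi.zero_apply] at hy₀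
  have hc : ∀ y, f (σ y * z₀) - f (y * z₀)
      = -2 * (f x₁ * f z₀ + f (x₁ * z₀ * z₀)) / f (x₁ * z₀) * f y := fun y => by
    field_simp
    linear_combination key x₁ y
  refine ⟨_, hc, fun x => mul_left_cancel₀ hy₀ ?_⟩
  have hx := key x y₀
  rw [hc] at hx
  linear_combination hx

lemma apply_map_mul_center_mul_center (hσσ : ∀ x, σ (σ x) = x)
    (hσz : ∀ a, σ (a * z₀) = σ a * σ z₀) (hodd : ∀ x, f (σ x) = -f x)
    (hf : IsVanVleckSolution σ z₀ f) (x : S) :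
    f (σ (x * z₀) * z₀) = f (σ x * z₀ * z₀) - 2 * f x * f z₀ := by
  have h := hf (σ x) (σ z₀)
  rw [hσσ, hodd x, hodd z₀, ← hσz] at h
  linear_combination -h

lemma mul_two_mul_apply_mul_center_add_eq_zero (hσσ : ∀ x, σ (σ x) = x)
    (hσz : ∀ a, σ (a * z₀) = σ a * σ z₀) (hodd : ∀ x, f (σ x) = -f x)
    (hf : IsVanVleckSolution σ z₀ f) {c : ℂ} (hc : ∀ y, f (σ y * z₀) - f (y * z₀) = c * f y)
    (hcF : ∀ x, c * f (x * z₀) = -2 * (f x * f z₀ + f (x * z₀ * z₀))) (x : S) :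
    c * (2 * f (x * z₀) + c * f x) = 0 := by
  have hσx := hcF (σ x)
  rw [hodd] at hσx
  linear_combination -2 * hc (x * z₀) + 2 * hf.apply_map_mul_center_mul_center hσσ hσz hodd x
    + hσx - hcF x - c * hc x

lemma eq_zero_of_forall_apply_mul_center_eq_mul
    (hσ : (∀ x y, σ (x * y) = σ x * σ y) ∨ (∀ x y, σ (x * y) = σ y * σ x))
    (hσσ : ∀ x, σ (σ x) = x) (hodd : ∀ x, f (σ x) = -f x) (hf : IsVanVleckSolution σ z₀ f)
    {k : ℂ} (hk : ∀ x, f (x * z₀) = k * f x) : f = 0 := by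
  refine eq_zero_of_forall_mul_sub_eq hσ hσσ hodd (k := k) fun x => ?_
  rw [← hf x x, hk, hk]
  ring

end IsVanVleckSolution

end

theorem stmt10 {S : Type*} [Semigroup S] (σ : S → S) (hσ : (∀ x y, σ (x * y) = σ x * σ y) ∨ (∀ x y, σ (x * y) = σ y * σ x))
    (hσσ : ∀ x, σ (σ x) = x)
    (z₀ : S) (hz : ∀ x, z₀ * x = x * z₀) (f : S → ℂ) (hf0 : f ≠ 0) (hf : ∀ x y, f (x * σ y * z₀) - f (x * y * z₀) = 2 * f x * f y) :
    ∀ x, f (σ x * z₀) = f (x * z₀) := by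
  have hsol : IsVanVleckSolution σ z₀ f := hf
  have hσz := map_mul_of_forall_mul_comm hσ hz
  have hodd := hsol.apply_map hσσ hf0
  obtain ⟨c, hc, hcF⟩ := hsol.exists_sub_eq_mul hσσ hσz hz hodd hf0
  obtain rfl : c = 0 := by
    by_contra hc0
    refine hf0 (hsol.eq_zero_of_forall_apply_mul_center_eq_mul hσ hσσ hodd (k := -c / 2) ?_)
    intro x
    have h := hsol.mul_two_mul_apply_mul_center_add_eq_zero hσσ hσz hodd hc hcF x
    linear_combination (mul_eq_zero.mp h).resolve_left hc0 / 2
  intro x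
  linear_combination hc x
end

section
/- If f: S → ℂ is a nonzero solution of f(xσ(y)z₀) − f(xyz₀) = 2f(x)f(y), then f and g(x) := f(xz₀)/f(z₀) satisfy the sine addition law f(xy) = f(x)g(y) + f(y)g(x) for all x,y ∈ S. -/
/-!
Put `F x = f (x * z₀)`. Since `z₀` is central, `f ∘ σ = -f` and the equation taken at
`(x * z₀, y)`, `(x * σ y, z₀)` and `(x, y * z₀)` combine into the subtraction law
`f z₀ * f (x * σ y) = f x * F y - F x * f y`. At `y = z₀` it gives
`f z₀ * (F x - F (σ x)) = f (z₀ * z₀) * f x`. The equation at `(z₀, z₀)` and `(σ z₀, z₀)` shows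
`F (σ (z₀ * z₀)) = F (z₀ * z₀)`, so `f (z₀ * z₀) ^ 2 = 0` and `F ∘ σ = F` as soon as `f z₀ ≠ 0`;
replacing `y` by `σ y` in the subtraction law is then the sine addition law.
If `f z₀ = 0`, the subtraction law makes `F` proportional to `f`, hence odd, and the equation at
`(t, t)` and `(σ t, σ t)` forces `f t ^ 2 = 0` for every `t`.
-/

section

variable {S : Type*} [Semigroup S] {σ : S → S} {z₀ : S} {f : S → ℂ}

theorem map_mul_of_central
    (hσ : (∀ x y, σ (x * y) = σ x * σ y) ∨ (∀ x y, σ (x * y) = σ y * σ x))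
    (hz : ∀ x, z₀ * x = x * z₀) (y : S) : σ (y * z₀) = σ y * σ z₀ := by
  rcases hσ with hm | ha
  · exact hm y z₀
  · rw [← hz, ha]

theorem apply_invol_eq_neg (hσσ : ∀ x, σ (σ x) = x) (hf0 : f ≠ 0)
    (hf : ∀ x y, f (x * σ y * z₀) - f (x * y * z₀) = 2 * f x * f y) (y : S) :
    f (σ y) = -f y := by
  obtain ⟨x, hx⟩ : ∃ x, f x ≠ 0 := Function.ne_iff.mp hf0
  have h := hf x (σ y)
  rw [hσσ] at h
  have hsum : 2 * f x * (f y + f (σ y)) = 2 * f x * 0 := by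
    linear_combination -hf x y - h
  linear_combination mul_left_cancel₀ (mul_ne_zero two_ne_zero hx) hsum

theorem apply_z₀_mul_apply_mul_invol
    (hσ : (∀ x y, σ (x * y) = σ x * σ y) ∨ (∀ x y, σ (x * y) = σ y * σ x))
    (hz : ∀ x, z₀ * x = x * z₀)
    (hf : ∀ x y, f (x * σ y * z₀) - f (x * y * z₀) = 2 * f x * f y) (x y : S) :
    f z₀ * f (x * σ y) = f x * f (y * z₀) - f (x * z₀) * f y := by
  have hcomm : ∀ a b, a * z₀ * b = a * b * z₀ := fun a b => by
    rw [mul_assoc, hz, ← mul_assoc]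
  have h₁ := hf (x * z₀) y
  rw [hcomm x (σ y), hcomm x y] at h₁
  have h₂ := hf (x * σ y) z₀
  have h₃ := hf x (y * z₀)
  rw [map_mul_of_central hσ hz, ← mul_assoc, ← mul_assoc] at h₃
  linear_combination (h₃ - h₁ - h₂) / 2

theorem apply_z₀_mul_apply_invol_mul_z₀
    (hσ : (∀ x y, σ (x * y) = σ x * σ y) ∨ (∀ x y, σ (x * y) = σ y * σ x))
    (hσσ : ∀ x, σ (σ x) = x) (hz : ∀ x, z₀ * x = x * z₀) (hf0 : f ≠ 0)
    (hf : ∀ x y, f (x * σ y * z₀) - f (x * y * z₀) = 2 * f x * f y) (x : S) :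
    f z₀ * f (σ x * z₀) = f z₀ * f (x * z₀) - f (z₀ * z₀) * f x := by
  have hodd := apply_invol_eq_neg hσσ hf0 hf (σ x * z₀)
  rw [map_mul_of_central hσ hz, hσσ] at hodd
  linear_combination -apply_z₀_mul_apply_mul_invol hσ hz hf x z₀ + f z₀ * hodd

theorem apply_z₀_mul_z₀_eq_zero
    (hσ : (∀ x y, σ (x * y) = σ x * σ y) ∨ (∀ x y, σ (x * y) = σ y * σ x))
    (hσσ : ∀ x, σ (σ x) = x) (hz : ∀ x, z₀ * x = x * z₀) (hf0 : f ≠ 0)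
    (hf : ∀ x y, f (x * σ y * z₀) - f (x * y * z₀) = 2 * f x * f y) :
    f (z₀ * z₀) = 0 := by
  have h₁ := hf z₀ z₀
  rw [hz (σ z₀)] at h₁
  have h₂ := hf (σ z₀) z₀
  rw [apply_invol_eq_neg hσσ hf0 hf, ← map_mul_of_central hσ hz] at h₂
  have h₃ := apply_z₀_mul_apply_invol_mul_z₀ hσ hσσ hz hf0 hf (z₀ * z₀)
  have hsq : f (z₀ * z₀) ^ 2 = 0 := by linear_combination h₃ - f z₀ * (h₁ + h₂)
  exact sq_eq_zero_iff.mp hsq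

theorem apply_invol_mul_self_eq_neg {G : S → ℂ}
    (hσ : (∀ x y, σ (x * y) = σ x * σ y) ∨ (∀ x y, σ (x * y) = σ y * σ x))
    (hσσ : ∀ x, σ (σ x) = x) (hG : ∀ w, G (σ w) = -G w) (t : S) :
    G (σ t * t) = -G (t * σ t) := by
  rcases hσ with hm | ha
  · rw [← hG, hm, hσσ]
  · have hl := hG (σ t * t)
    have hr := hG (t * σ t)
    rw [ha, hσσ] at hl hr
    linear_combination hl / 2 + hr / 2

theorem apply_z₀_ne_zero
    (hσ : (∀ x y, σ (x * y) = σ x * σ y) ∨ (∀ x y, σ (x * y) = σ y * σ x))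
    (hσσ : ∀ x, σ (σ x) = x) (hz : ∀ x, z₀ * x = x * z₀) (hf0 : f ≠ 0)
    (hf : ∀ x y, f (x * σ y * z₀) - f (x * y * z₀) = 2 * f x * f y) :
    f z₀ ≠ 0 := by
  intro h0
  obtain ⟨t, ht⟩ : ∃ t, f t ≠ 0 := Function.ne_iff.mp hf0
  have hodd := apply_invol_eq_neg hσσ hf0 hf
  have hprop : ∀ y, f t * f (y * z₀) = f (t * z₀) * f y := fun y => by
    linear_combination -apply_z₀_mul_apply_mul_invol hσ hz hf t y + f (t * σ y) * h0
  have hFodd : ∀ w, f (σ w * z₀) = -f (w * z₀) := fun w =>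
    mul_left_cancel₀ ht (by linear_combination hprop (σ w) + f (t * z₀) * hodd w + hprop w)
  have hσtt : σ (t * t) = σ t * σ t := by rcases hσ with h | h <;> exact h t t
  have hmix : f (σ t * t * z₀) = -f (t * σ t * z₀) :=
    apply_invol_mul_self_eq_neg (G := fun w => f (w * z₀)) hσ hσσ hFodd t
  have h₁ := hf (σ t) (σ t)
  rw [hσσ, ← hσtt, hFodd, hmix, hodd] at h₁
  have hsq : f t ^ 2 = 0 := by linear_combination -(hf t t + h₁) / 4
  exact ht (sq_eq_zero_iff.mp hsq)

end

theorem stmt13 {S : Type*} [Semigroup S] (σ : S → S) (hσ : (∀ x y, σ (x * y) = σ x * σ y) ∨ (∀ x y, σ (x * y) = σ y * σ x))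
    (hσσ : ∀ x, σ (σ x) = x)
    (z₀ : S) (hz : ∀ x, z₀ * x = x * z₀) (f : S → ℂ) (hf0 : f ≠ 0) (hf : ∀ x y, f (x * σ y * z₀) - f (x * y * z₀) = 2 * f x * f y)
    (g : S → ℂ) (hg : ∀ x, g x = f (x * z₀) / f z₀) :
    ∀ x y, f (x * y) = f x * g y + f y * g x := by
  intro x y
  have h0 := apply_z₀_ne_zero hσ hσσ hz hf0 hf
  have hgσ : f (σ y * z₀) = f (y * z₀) := by
    have h := apply_z₀_mul_apply_invol_mul_z₀ hσ hσσ hz hf0 hf y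
    rw [apply_z₀_mul_z₀_eq_zero hσ hσσ hz hf0 hf, zero_mul, sub_zero] at h
    exact mul_left_cancel₀ h0 h
  have hsub := apply_z₀_mul_apply_mul_invol hσ hz hf x (σ y)
  rw [hσσ, hgσ, apply_invol_eq_neg hσσ hf0 hf] at hsub
  rw [hg, hg]
  field_simp
  linear_combination hsub
end
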